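/- There exist a constant c > 0 and for each n ∈ ℕ a function f ∈ L^1[0,1] with ‖f‖ = 1, all nonzero Haar coefficients of absolute value at least δ = 2^{-2n}, and a subset A of its Haar support such that A_ε(f) = A for every 0 < ε < 1 and ‖P_A(f)‖_{L^1} ≥ c·n ≥ c'·log(1/δ). In particular, the logarithmic dependence on δ in the near-unconditionality bound for the Haar basis of L^1 cannot be removed. -/

import Mathlib

open MeasureTheory Set
open scoped Classical

noncomputable section

/-- The dyadic interval `[k/2^n, (k+1)/2^n)`. -/
def dyadic (n k : ℕ) : Set ℝ := Set.Ico ((k : ℝ) / 2 ^ n) (((k : ℝ) + 1) / 2 ^ n)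

/-- Left half `I⁺` of a dyadic interval. -/
def dplus (n k : ℕ) : Set ℝ := dyadic (n + 1) (2 * k)

/-- Right half `I⁻` of a dyadic interval. -/
def dminus (n k : ℕ) : Set ℝ := dyadic (n + 1) (2 * k + 1)

/-- Haar coefficient `c_I(f)` with respect to the L¹-normalized Haar system. -/
def haarC (f : ℝ → ℝ) (n k : ℕ) : ℝ :=
  (∫ x in dplus n k, f x) - ∫ x in dminus n k, f x

/-- The L¹-normalized Haar function `h_I`. -/
def haarF (n k : ℕ) : ℝ → ℝ := fun x =>
  if x ∈ dplus n k then (2 : ℝ) ^ n else if x ∈ dminus n k then -(2 : ℝ) ^ n else 0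

/-- Index set for the Haar system: the dyadic intervals of `[0,1]` together with `[0,2]`. -/
inductive HIdx where
  | root : HIdx
  | node : ℕ → ℕ → HIdx
  deriving DecidableEq

/-- Validity of an index: `node n k` encodes `[k/2^n, (k+1)/2^n) ⊆ [0,1)`. -/
def HIdx.valid : HIdx → Prop
  | .root => True
  | .node n k => k < 2 ^ n

/-- The interval encoded by an index. -/
def HIdx.iset : HIdx → Set ℝ
  | .root => Set.Ico (0 : ℝ) 2
  | .node n k => dyadic n k

/-- Haar coefficient, where `c_{[0,2]}(f) = ∫_{[0,1)} f` (for `f` supported in `[0,1)`). -/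
def hcoef (f : ℝ → ℝ) : HIdx → ℝ
  | .root => ∫ x in Set.Ico (0 : ℝ) 1, f x
  | .node n k => haarC f n k

/-- The `ε`-branch enlargement `A_ε(f)` of a set `A` of Haar indices. -/
def henlarge (f : ℝ → ℝ) (A : Set HIdx) (ε : ℝ) : Set HIdx :=
  {J | J.valid ∧ ∃ I ∈ A, I.iset ⊆ J.iset ∧
    ∀ K : HIdx, K.valid → I.iset ⊆ K.iset → K.iset ⊆ J.iset →
      |hcoef f K - hcoef f I| < ε * |hcoef f I|}

/-!
Take `N = 4n` and let `f` be the Riesz product equal to `2 ^ (N / 2)` on the level-`N` dyadic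
intervals whose index has no bit set in an even position, and `0` elsewhere; so `f ≥ 0` and
`‖f‖₁ = ∫ f = 1`. Counting such indices inside dyadic blocks shows that the Haar coefficients
of `f` vanish at even levels and are `1 / 2 ^ ((ℓ + 1) / 2)` or `0` at an odd level `ℓ`. Let
`A` be the Haar support of `f` at the levels `ℓ ≡ 3 mod 4`: the parent of each interval in `A`
has coefficient `0`, so `A` does not enlarge. `P_A f` is a sum of `n` Haar blocks of heights
`2 · 4 ^ k` carried by nested sets; wherever a block is present, the highest one outweighs all
lower ones together, which gives `‖P_A f‖₁ ≥ n / 2`.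
-/

open scoped Finset

lemma volume_dyadic (a p : ℕ) : volume (dyadic a p) = ENNReal.ofReal ((2 ^ a : ℝ)⁻¹) := by
  rw [dyadic, Real.volume_Ico]
  congr 1
  field_simp
  ring

lemma measurableSet_dyadic (a p : ℕ) : MeasurableSet (dyadic a p) := measurableSet_Ico

lemma measureReal_dyadic (a p : ℕ) : volume.real (dyadic a p) = (2 ^ a : ℝ)⁻¹ := by
  rw [measureReal_def, volume_dyadic, ENNReal.toReal_ofReal (by positivity)]

lemma dyadic_subset_Ico {a p : ℕ} (hp : p < 2 ^ a) : dyadic a p ⊆ Ico 0 1 := by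
  rintro x ⟨h₀, h₁⟩
  have hp' : (p : ℝ) + 1 ≤ 2 ^ a := by exact_mod_cast hp
  refine ⟨le_trans (by positivity) h₀, h₁.trans_le ?_⟩
  rwa [div_le_one (by positivity)]

lemma dyadic_subset_dyadic_div {a b : ℕ} (hab : a ≤ b) (q : ℕ) :
    dyadic b q ⊆ dyadic a (q / 2 ^ (b - a)) := by
  set E := 2 ^ (b - a)
  have hE : (2 : ℝ) ^ b = E * 2 ^ a := by
    rw [Nat.cast_pow, Nat.cast_ofNat, ← pow_add, Nat.sub_add_cancel hab]
  have hlo : ((q / E : ℕ) : ℝ) * E ≤ q := by exact_mod_cast Nat.div_mul_le_self q E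
  have hhi : (q : ℝ) + 1 ≤ ((q / E : ℕ) + 1 : ℝ) * E := by
    exact_mod_cast (Nat.lt_mul_of_div_lt (Nat.lt_succ_self (q / E)) (by positivity) :
      q < (q / E + 1) * E)
  rintro x ⟨h₀, h₁⟩
  simp only [dyadic, hE, mem_Ico, ← div_div] at h₀ h₁ ⊢
  constructor
  · refine le_trans ?_ h₀
    gcongr
    rwa [le_div_iff₀ (by positivity)]
  · refine h₁.trans_le ?_
    gcongr
    rwa [div_le_iff₀ (by positivity)]

lemma dyadic_nonempty (a p : ℕ) : (dyadic a p).Nonempty :=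
  ⟨p / 2 ^ a, le_rfl, by gcongr; linarith⟩

lemma disjoint_dyadic {a p p' : ℕ} (h : p ≠ p') : Disjoint (dyadic a p) (dyadic a p') := by
  wlog hlt : p < p' generalizing p p'
  · exact (this h.symm (by omega)).symm
  have hle : (p : ℝ) + 1 ≤ p' := by exact_mod_cast hlt
  refine Set.disjoint_left.2 fun x hx hx' => ?_
  have : ((p : ℝ) + 1) / 2 ^ a ≤ p' / 2 ^ a := by gcongr
  linarith [hx.2, hx'.1]

lemma le_and_div_eq_of_dyadic_subset {a b p q : ℕ} (h : dyadic b q ⊆ dyadic a p) :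
    a ≤ b ∧ q / 2 ^ (b - a) = p := by
  have hab : a ≤ b := by
    have hvol := measure_mono (μ := volume) h
    rw [volume_dyadic, volume_dyadic, ENNReal.ofReal_le_ofReal_iff (by positivity)] at hvol
    by_contra! hba
    have : (2 : ℝ) ^ b < 2 ^ a := pow_lt_pow_right₀ one_lt_two hba
    have : ((2 : ℝ) ^ a)⁻¹ < (2 ^ b)⁻¹ := by gcongr
    linarith
  refine ⟨hab, ?_⟩
  by_contra hne
  obtain ⟨x, hx⟩ := dyadic_nonempty b q
  exact Set.disjoint_left.1 (disjoint_dyadic hne) (dyadic_subset_dyadic_div hab q hx) (h hx)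

lemma dyadic_succ_subset (ℓ i : ℕ) : dyadic (ℓ + 1) i ⊆ dyadic ℓ (i / 2) := by
  simpa using dyadic_subset_dyadic_div (Nat.le_succ ℓ) i

lemma HIdx.eq_or_parent_subset {J : HIdx} {ℓ i : ℕ} (hi : i < 2 ^ (ℓ + 1))
    (h : dyadic (ℓ + 1) i ⊆ J.iset) : J = .node (ℓ + 1) i ∨ dyadic ℓ (i / 2) ⊆ J.iset := by
  cases J with
  | root =>
    refine Or.inr ((dyadic_subset_Ico (by omega)).trans ?_)
    exact Ico_subset_Ico_right one_le_two
  | node s q =>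
    obtain ⟨hs, rfl⟩ := le_and_div_eq_of_dyadic_subset h
    rcases hs.eq_or_lt with rfl | hs
    · simp
    · right
      have hdiv : i / 2 / 2 ^ (ℓ - s) = i / 2 ^ (ℓ + 1 - s) := by
        rw [Nat.div_div_eq_div_mul, ← pow_succ', Nat.succ_sub (by omega)]
      simpa [HIdx.iset, hdiv] using dyadic_subset_dyadic_div (by omega : s ≤ ℓ) (i / 2)

/-- The parent of `I` lies between `I` and any strictly larger interval, and passing to it moves
the coefficient by `|c_I| ≥ ε |c_I|`. -/
theorem henlarge_eq_self {f : ℝ → ℝ} {A : Set HIdx} {ε : ℝ} (hε₀ : 0 < ε) (hε₁ : ε ≤ 1)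
    (hA : ∀ I ∈ A, ∃ ℓ i, I = .node (ℓ + 1) i ∧ i < 2 ^ (ℓ + 1) ∧ hcoef f I ≠ 0 ∧
      hcoef f (.node ℓ (i / 2)) = 0) :
    henlarge f A ε = A := by
  ext J
  constructor
  · rintro ⟨-, I, hI, hIJ, hK⟩
    obtain ⟨ℓ, i, rfl, hi, hne, hparent⟩ := hA I hI
    rcases HIdx.eq_or_parent_subset hi hIJ with rfl | hsub
    · exact hI
    · have hparent_valid : (HIdx.node ℓ (i / 2)).valid := by
        simp only [HIdx.valid]; omega
      have := hK _ hparent_valid (dyadic_succ_subset ℓ i) hsub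
      rw [hparent, zero_sub, abs_neg] at this
      nlinarith [abs_pos.2 hne]
  · intro hJ
    obtain ⟨ℓ, i, rfl, hi, hne, -⟩ := hA J hJ
    refine ⟨hi, _, hJ, subset_rfl, fun K _ hJK hKJ => ?_⟩
    rcases HIdx.eq_or_parent_subset hi hJK with rfl | hsub
    · simpa using mul_pos hε₀ (abs_pos.2 hne)
    · exact absurd (le_and_div_eq_of_dyadic_subset (hsub.trans hKJ)).1 (by omega)

lemma haarC_eq_zero_of_eqOn {f : ℝ → ℝ} {a : ℝ} {ℓ i : ℕ}
    (h : EqOn f (fun _ => a) (dyadic ℓ i)) : haarC f ℓ i = 0 := by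
  have half (r : ℕ) (hr : r / 2 = i) :
      ∫ x in dyadic (ℓ + 1) r, f x = a * (2 ^ (ℓ + 1) : ℝ)⁻¹ := by
    have hsub : dyadic (ℓ + 1) r ⊆ dyadic ℓ i := hr ▸ dyadic_succ_subset ℓ r
    rw [setIntegral_congr_fun (measurableSet_dyadic _ _) (h.mono hsub), setIntegral_const,
      measureReal_dyadic, smul_eq_mul, mul_comm]
  rw [haarC, dplus, dminus, half _ (by omega), half _ (by omega), sub_self]

def stepFun (N : ℕ) (c : ℕ → ℝ) : ℝ → ℝ := fun x =>
  ∑ j ∈ Finset.range (2 ^ N), (dyadic N j).indicator (fun _ => c j) x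

/-- `j / 2 ^ (N - L) = q` says that the `j`-th dyadic interval of level `N` lies in the `q`-th
one of level `L`. -/
def blockSum (N L q : ℕ) (c : ℕ → ℝ) : ℝ :=
  ∑ j ∈ (Finset.range (2 ^ N)).filter (fun j => j / 2 ^ (N - L) = q), c j

lemma integrable_indicator_dyadic (N j : ℕ) (a : ℝ) :
    Integrable ((dyadic N j).indicator fun _ => a) :=
  (integrable_indicator_iff (measurableSet_dyadic _ _)).2
    (integrableOn_const (by rw [volume_dyadic]; exact ENNReal.ofReal_ne_top))

section StepFun

variable {N : ℕ} {c : ℕ → ℝ}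

lemma integrable_stepFun : Integrable (stepFun N c) :=
  integrable_finsetSum _ fun j _ => integrable_indicator_dyadic N j (c j)

lemma stepFun_eq_zero_of_notMem {x : ℝ} (hx : x ∉ Ico (0 : ℝ) 1) : stepFun N c x = 0 :=
  Finset.sum_eq_zero fun _ hj => indicator_of_notMem
    (fun hxj => hx (dyadic_subset_Ico (Finset.mem_range.1 hj) hxj)) _

lemma stepFun_eq_of_mem {x : ℝ} {p : ℕ} (hp : p < 2 ^ N) (hx : x ∈ dyadic N p) :
    stepFun N c x = c p := by
  rw [stepFun, Finset.sum_eq_single_of_mem p (Finset.mem_range.2 hp), indicator_of_mem hx]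
  intro j _ hjp
  exact indicator_of_notMem (Set.disjoint_left.1 (disjoint_dyadic hjp.symm) hx) _

lemma abs_stepFun (x : ℝ) : |stepFun N c x| = stepFun N (fun j => |c j|) x := by
  by_cases hx : ∃ p < 2 ^ N, x ∈ dyadic N p
  · obtain ⟨p, hp, hxp⟩ := hx
    rw [stepFun_eq_of_mem hp hxp, stepFun_eq_of_mem hp hxp]
  · push Not at hx
    have hzero (c : ℕ → ℝ) : stepFun N c x = 0 := Finset.sum_eq_zero fun j hj =>
      indicator_of_notMem (hx j (Finset.mem_range.1 hj)) _
    rw [hzero, hzero, abs_zero]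

lemma setIntegral_stepFun {L : ℕ} (hL : L ≤ N) (q : ℕ) :
    ∫ x in dyadic L q, stepFun N c x = blockSum N L q c / 2 ^ N := by
  have piece (j : ℕ) : ∫ x in dyadic L q, (dyadic N j).indicator (fun _ => c j) x =
      if j / 2 ^ (N - L) = q then c j / 2 ^ N else 0 := by
    rw [setIntegral_indicator (measurableSet_dyadic _ _)]
    split_ifs with hj
    · rw [inter_eq_self_of_subset_right (hj ▸ dyadic_subset_dyadic_div hL j), setIntegral_const,
        measureReal_dyadic, smul_eq_mul, inv_mul_eq_div]
    · have hdisj := ((disjoint_dyadic hj).mono_left (dyadic_subset_dyadic_div hL j)).symm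
      rw [hdisj.inter_eq, Measure.restrict_empty, integral_zero_measure]
  simp only [stepFun]
  rw [integral_finsetSum _ fun j _ => (integrable_indicator_dyadic N j _).integrableOn,
    Finset.sum_congr rfl fun j _ => piece j, ← Finset.sum_filter, blockSum, Finset.sum_div]

lemma blockSum_zero_zero : blockSum N 0 0 c = ∑ j ∈ Finset.range (2 ^ N), c j := by
  rw [blockSum, Finset.filter_true_of_mem fun j hj =>
    Nat.div_eq_of_lt (by simpa using Finset.mem_range.1 hj)]

lemma dyadic_zero_zero : dyadic 0 0 = Ico 0 1 := by
  simp [dyadic]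

lemma integral_stepFun : ∫ x, stepFun N c x = blockSum N 0 0 c / 2 ^ N := by
  rw [← setIntegral_stepFun (Nat.zero_le N), dyadic_zero_zero,
    setIntegral_eq_integral_of_forall_compl_eq_zero fun x hx => stepFun_eq_zero_of_notMem hx]

lemma integral_abs_stepFun :
    ∫ x, |stepFun N c x| = blockSum N 0 0 (fun j => |c j|) / 2 ^ N := by
  simp only [abs_stepFun, integral_stepFun]

lemma hcoef_stepFun_root : hcoef (stepFun N c) .root = blockSum N 0 0 c / 2 ^ N := by
  rw [hcoef, ← dyadic_zero_zero, setIntegral_stepFun (Nat.zero_le N)]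

lemma hcoef_stepFun_node {ℓ : ℕ} (hℓ : ℓ < N) (i : ℕ) :
    hcoef (stepFun N c) (.node ℓ i) =
      (blockSum N (ℓ + 1) (2 * i) c - blockSum N (ℓ + 1) (2 * i + 1) c) / 2 ^ N := by
  rw [hcoef, haarC, dplus, dminus, setIntegral_stepFun hℓ, setIntegral_stepFun hℓ, sub_div]

lemma hcoef_stepFun_node_of_le {ℓ i : ℕ} (hℓ : N ≤ ℓ) (hi : i < 2 ^ ℓ) :
    hcoef (stepFun N c) (.node ℓ i) = 0 := by
  have hp : i / 2 ^ (ℓ - N) < 2 ^ N := by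
    rw [Nat.div_lt_iff_lt_mul (by positivity), ← pow_add, Nat.add_sub_cancel' hℓ]
    exact hi
  exact haarC_eq_zero_of_eqOn fun x hx =>
    stepFun_eq_of_mem hp (dyadic_subset_dyadic_div hℓ i hx)

end StepFun

/-- `s` is the position of bit `0` of `j` inside a longer binary word, as for `j = m / 2 ^ s`;
the condition is on the bits of `j` sitting at even positions of that word. -/
def EvenBitsZero (s j : ℕ) : Prop := ∀ p, Even (p + s) → j.testBit p = false

lemma evenBitsZero_iff_mod_div (s K j : ℕ) :
    EvenBitsZero s j ↔ EvenBitsZero s (j % 2 ^ K) ∧ EvenBitsZero (s + K) (j / 2 ^ K) := by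
  constructor
  · intro h
    refine ⟨fun p hp => ?_, fun p hp => ?_⟩
    · rw [Nat.testBit_mod_two_pow, h p hp, Bool.and_false]
    · rw [Nat.testBit_div_two_pow]
      exact h _ (by rwa [add_right_comm, add_assoc])
  · rintro ⟨hmod, hdiv⟩ p hp
    rcases lt_or_ge p K with hpK | hpK
    · simpa [Nat.testBit_mod_two_pow, hpK] using hmod p hp
    · obtain ⟨t, rfl⟩ := Nat.exists_eq_add_of_le hpK
      have := hdiv t (by rwa [add_comm K, add_right_comm, add_assoc] at hp)
      rwa [Nat.testBit_div_two_pow, add_comm] at this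

lemma EvenBitsZero.div_two_pow {s j : ℕ} (h : EvenBitsZero s j) (K : ℕ) :
    EvenBitsZero (s + K) (j / 2 ^ K) :=
  ((evenBitsZero_iff_mod_div s K j).1 h).2

lemma evenBitsZero_congr {s t : ℕ} (h : s % 2 = t % 2) (j : ℕ) :
    EvenBitsZero s j ↔ EvenBitsZero t j := by
  have (p : ℕ) : (p + s) % 2 = 0 ↔ (p + t) % 2 = 0 := by omega
  simp only [EvenBitsZero, Nat.even_iff, this]

lemma evenBitsZero_zero (s : ℕ) : EvenBitsZero s 0 := fun p _ => Nat.zero_testBit p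

lemma evenBitsZero_one (s : ℕ) : EvenBitsZero s 1 ↔ ¬ Even s := by
  refine ⟨fun h hs => by simpa using h 0 (by simpa using hs), fun hs p hp => ?_⟩
  rcases p with _ | p
  · exact absurd (by simpa using hp) hs
  · simp [Nat.testBit_succ]

lemma evenBitsZero_two_mul (s i : ℕ) : EvenBitsZero s (2 * i) ↔ EvenBitsZero (s + 1) i := by
  simpa [evenBitsZero_zero] using evenBitsZero_iff_mod_div s 1 (2 * i)

lemma evenBitsZero_two_mul_add_one (s i : ℕ) :
    EvenBitsZero s (2 * i + 1) ↔ ¬ Even s ∧ EvenBitsZero (s + 1) i := by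
  have : (2 * i + 1) / 2 = i := by omega
  simpa [evenBitsZero_one, this] using evenBitsZero_iff_mod_div s 1 (2 * i + 1)

lemma evenBitsZero_one_iff_div_two (j : ℕ) : EvenBitsZero 1 j ↔ EvenBitsZero 0 (j / 2) := by
  have hmod : EvenBitsZero 1 (j % 2) := by
    rcases Nat.mod_two_eq_zero_or_one j with h | h <;>
      simp [h, evenBitsZero_zero, evenBitsZero_one]
  rw [evenBitsZero_iff_mod_div 1 1 j, evenBitsZero_congr (by rfl : (1 + 1) % 2 = 0 % 2), pow_one]
  exact and_iff_right hmod


lemma card_filter_mod_div {N K : ℕ} (hK : K ≤ N) (P Q : ℕ → Prop) [DecidablePred P]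
    [DecidablePred Q] :
    #{j ∈ Finset.range (2 ^ N) | P (j % 2 ^ K) ∧ Q (j / 2 ^ K)} =
      #{r ∈ Finset.range (2 ^ K) | P r} * #{q ∈ Finset.range (2 ^ (N - K)) | Q q} := by
  have hpos : 0 < 2 ^ K := by positivity
  have hN : 2 ^ N = 2 ^ K * 2 ^ (N - K) := by rw [← pow_add, Nat.add_sub_cancel' hK]
  have hdiv {r : ℕ} (hr : r < 2 ^ K) (q : ℕ) : (r + 2 ^ K * q) / 2 ^ K = q := by
    rw [Nat.add_mul_div_left _ _ hpos, Nat.div_eq_of_lt hr, zero_add]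
  have hmod {r : ℕ} (hr : r < 2 ^ K) (q : ℕ) : (r + 2 ^ K * q) % 2 ^ K = r := by
    rw [Nat.add_mul_mod_self_left, Nat.mod_eq_of_lt hr]
  rw [← Finset.card_product]
  refine Finset.card_nbij' (fun j => (j % 2 ^ K, j / 2 ^ K)) (fun r => r.1 + 2 ^ K * r.2)
    ?_ ?_ (fun j _ => Nat.mod_add_div j (2 ^ K)) ?_
  · intro j hj
    simp only [Finset.coe_filter, Finset.mem_range, Finset.coe_product, mem_prod] at hj ⊢
    refine ⟨⟨Nat.mod_lt j hpos, hj.2.1⟩, ?_, hj.2.2⟩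
    rw [Nat.div_lt_iff_lt_mul hpos, mul_comm, ← hN]
    exact hj.1
  · rintro ⟨r, q⟩ hrq
    simp only [Finset.coe_filter, Finset.mem_range, Finset.coe_product, mem_prod] at hrq ⊢
    obtain ⟨⟨hr, hP⟩, hq, hQ⟩ := hrq
    rw [mem_ofPred_eq, hmod hr, hdiv hr]
    refine ⟨?_, hP, hQ⟩
    calc r + 2 ^ K * q < 2 ^ K * (q + 1) := by linarith
      _ ≤ 2 ^ N := by rw [hN]; exact Nat.mul_le_mul_left _ hq
  · rintro ⟨r, q⟩ hrq
    simp only [Finset.coe_product, mem_prod, Finset.coe_filter, Finset.mem_range] at hrq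
    simp [hmod hrq.1.1, hdiv hrq.1.1]

lemma card_filter_div_eq {N K q : ℕ} (hK : K ≤ N) (hq : q < 2 ^ (N - K)) :
    #{j ∈ Finset.range (2 ^ N) | j / 2 ^ K = q} = 2 ^ K := by
  simpa [Finset.filter_eq', hq] using card_filter_mod_div hK (fun _ => True) (· = q)

lemma card_filter_evenBitsZero (M s : ℕ) :
    #{j ∈ Finset.range (2 ^ M) | EvenBitsZero s j} = 2 ^ ((M + s % 2) / 2) := by
  induction M generalizing s with
  | zero =>
    simp [Finset.filter_singleton, evenBitsZero_zero, Nat.div_eq_of_lt (Nat.mod_lt s two_pos)]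
  | succ M ih =>
    have hlow : #{r ∈ Finset.range (2 ^ 1) | EvenBitsZero s r} = if Even s then 1 else 2 := by
      rw [show Finset.range (2 ^ 1) = {0, 1} by rfl, Finset.filter_insert, Finset.filter_singleton,
        if_pos (evenBitsZero_zero s)]
      by_cases hs : Even s <;> simp [evenBitsZero_one, hs]
    rw [Finset.filter_congr fun j _ => evenBitsZero_iff_mod_div s 1 j,
      card_filter_mod_div (Nat.le_add_left 1 M), hlow, Nat.add_sub_cancel, ih]
    rcases Nat.mod_two_eq_zero_or_one s with hs | hs
    · rw [if_pos (Nat.even_iff.2 hs), one_mul]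
      congr 1
      omega
    · rw [if_neg (Nat.not_even_iff.2 hs), ← pow_succ']
      congr 1
      omega

lemma card_filter_evenBitsZero_div {N K : ℕ} (hK : K ≤ N) (s : ℕ) :
    #{j ∈ Finset.range (2 ^ N) | EvenBitsZero s (j / 2 ^ K)} =
      2 ^ K * 2 ^ ((N - K + s % 2) / 2) := by
  simpa [card_filter_evenBitsZero] using card_filter_mod_div hK (fun _ => True) (EvenBitsZero s)

lemma card_filter_div_eq_and_evenBitsZero {N K q : ℕ} (hK : K ≤ N) (hq : q < 2 ^ (N - K))
    (s : ℕ) :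
    #{j ∈ Finset.range (2 ^ N) | j / 2 ^ K = q ∧ EvenBitsZero s j} =
      if EvenBitsZero (s + K) q then 2 ^ ((K + s % 2) / 2) else 0 := by
  have hsplit (j : ℕ) : j / 2 ^ K = q ∧ EvenBitsZero s j ↔
      EvenBitsZero s (j % 2 ^ K) ∧ (j / 2 ^ K = q ∧ EvenBitsZero (s + K) (j / 2 ^ K)) := by
    rw [evenBitsZero_iff_mod_div s K j]
    constructor
    · rintro ⟨rfl, h₁, h₂⟩
      exact ⟨h₁, rfl, h₂⟩
    · rintro ⟨h₁, rfl, h₂⟩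
      exact ⟨rfl, h₁, h₂⟩
  have hsingle : #{q' ∈ Finset.range (2 ^ (N - K)) | q' = q ∧ EvenBitsZero (s + K) q'} =
      if EvenBitsZero (s + K) q then 1 else 0 := by
    split_ifs with hs
    · rw [Finset.card_eq_one]
      exact ⟨q, by ext q'; constructor <;> simp_all⟩
    · simp_all
  rw [Finset.filter_congr fun j _ => hsplit j,
    card_filter_mod_div hK (EvenBitsZero s) fun q' => q' = q ∧ EvenBitsZero (s + K) q',
    card_filter_evenBitsZero, hsingle]
  split_ifs <;> simp

section BlockSum

variable {N L q : ℕ}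

lemma blockSum_sum {ι : Type*} (s : Finset ι) (c : ι → ℕ → ℝ) :
    blockSum N L q (fun j => ∑ k ∈ s, c k j) = ∑ k ∈ s, blockSum N L q (c k) :=
  Finset.sum_comm

lemma blockSum_of_forall_eq (hL : L ≤ N) (hq : q < 2 ^ L) {c : ℕ → ℝ} {a : ℝ}
    (h : ∀ j, j / 2 ^ (N - L) = q → c j = a) : blockSum N L q c = 2 ^ (N - L) * a := by
  rw [blockSum, Finset.sum_congr rfl fun j hj => h j (Finset.mem_filter.1 hj).2, Finset.sum_const,
    card_filter_div_eq (Nat.sub_le N L) (by rwa [Nat.sub_sub_self hL]), nsmul_eq_mul]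
  push_cast
  ring

lemma xor_two_pow_div_two_pow {u K : ℕ} (h : u < K) (j : ℕ) :
    (j ^^^ 2 ^ u) / 2 ^ K = j / 2 ^ K :=
  Nat.eq_of_testBit_eq fun t => by
    rw [Nat.testBit_div_two_pow, Nat.testBit_div_two_pow, Nat.testBit_xor,
      Nat.testBit_two_pow_of_ne (by omega), Bool.xor_false]

/-- Pairing `j` with `j ^^^ 2 ^ u` flips bit `u`, which stays inside every block of level `L`. -/
lemma blockSum_eq_zero_of_xor {u : ℕ} (hu : u < N - L) {c : ℕ → ℝ}
    (hc : ∀ j, c (j ^^^ 2 ^ u) = -c j) : blockSum N L q c = 0 := by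
  refine Finset.sum_involution (fun j _ => j ^^^ 2 ^ u) (fun j _ => by rw [hc]; ring)
    (fun j _ hj hfix => hj (by linarith [hfix ▸ hc j])) (fun j hj => ?_)
    (fun j _ => Nat.xor_xor_cancel_right j _)
  simp only [Finset.mem_filter, Finset.mem_range] at hj ⊢
  rw [← Nat.div_eq_zero_iff_lt (by positivity), xor_two_pow_div_two_pow (by omega),
    Nat.div_eq_zero_iff_lt (by positivity), xor_two_pow_div_two_pow hu]
  exact hj

end BlockSum

lemma hcoef_stepFun_sum {N : ℕ} {ι : Type*} (s : Finset ι) (c : ι → ℕ → ℝ) {I : HIdx}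
    (hI : I.valid) :
    hcoef (stepFun N fun j => ∑ k ∈ s, c k j) I = ∑ k ∈ s, hcoef (stepFun N (c k)) I := by
  cases I with
  | root => simp only [hcoef_stepFun_root, blockSum_sum, Finset.sum_div]
  | node ℓ i =>
    rcases lt_or_ge ℓ N with hℓ | hℓ
    · simp only [hcoef_stepFun_node hℓ, blockSum_sum, ← Finset.sum_sub_distrib, Finset.sum_div]
    · simp [hcoef_stepFun_node_of_le hℓ hI]

/-- The values on the level-`N` intervals of `∑ i, a i • h_{ℓ,i}`, the `h_{ℓ,i}` being the
`L¹`-normalized Haar functions of level `ℓ < N`: the `j`-th interval lies in the level-`ℓ`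
interval `j / 2 ^ (N - ℓ)`, in its right half iff bit `N - ℓ - 1` of `j` is set. -/
def haarStep (N ℓ : ℕ) (a : ℕ → ℝ) (j : ℕ) : ℝ :=
  (if j.testBit (N - ℓ - 1) then -2 ^ ℓ else 2 ^ ℓ) * a (j / 2 ^ (N - ℓ))

section HaarStep

variable {N ℓ : ℕ} {a : ℕ → ℝ}

lemma haarStep_xor (hℓ : ℓ < N) (j : ℕ) :
    haarStep N ℓ a (j ^^^ 2 ^ (N - ℓ - 1)) = -haarStep N ℓ a j := by
  rw [haarStep, haarStep, xor_two_pow_div_two_pow (by omega), Nat.testBit_xor,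
    Nat.testBit_two_pow_self]
  cases j.testBit (N - ℓ - 1) <;> simp

lemma haarStep_eq_haarStep_div {L : ℕ} (hℓL : ℓ < L) (hLN : L ≤ N) (j : ℕ) :
    haarStep N ℓ a j = haarStep L ℓ a (j / 2 ^ (N - L)) := by
  rw [haarStep, haarStep, Nat.testBit_div_two_pow, Nat.div_div_eq_div_mul, ← pow_add,
    show L - ℓ - 1 + (N - L) = N - ℓ - 1 by omega, show N - L + (L - ℓ) = N - ℓ by omega]

lemma blockSum_haarStep_of_le {L : ℕ} (hℓ : ℓ < N) (hL : L ≤ ℓ) (q : ℕ) :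
    blockSum N L q (haarStep N ℓ a) = 0 :=
  blockSum_eq_zero_of_xor (by omega) (haarStep_xor hℓ)

lemma blockSum_haarStep_of_lt {L q : ℕ} (hℓL : ℓ < L) (hLN : L ≤ N) (hq : q < 2 ^ L) :
    blockSum N L q (haarStep N ℓ a) = 2 ^ (N - L) * haarStep L ℓ a q :=
  blockSum_of_forall_eq hLN hq fun j hj => by rw [haarStep_eq_haarStep_div hℓL hLN, hj]

lemma hcoef_stepFun_haarStep_root (hℓ : ℓ < N) :
    hcoef (stepFun N (haarStep N ℓ a)) .root = 0 := by
  rw [hcoef_stepFun_root, blockSum_haarStep_of_le hℓ (Nat.zero_le ℓ), zero_div]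

lemma hcoef_stepFun_haarStep_node {ℓ' i : ℕ} (hℓ : ℓ < N) (hℓ' : ℓ' < N) (hi : i < 2 ^ ℓ') :
    hcoef (stepFun N (haarStep N ℓ a)) (.node ℓ' i) = if ℓ' = ℓ then a i else 0 := by
  rw [hcoef_stepFun_node hℓ']
  rcases lt_or_ge ℓ' ℓ with hlt | hge
  · rw [blockSum_haarStep_of_le hℓ hlt, blockSum_haarStep_of_le hℓ hlt, if_neg hlt.ne]
    simp
  have hi' : 2 * i + 1 < 2 ^ (ℓ' + 1) := by rw [pow_succ]; omega
  rw [blockSum_haarStep_of_lt (L := ℓ' + 1) (by omega) hℓ' (by omega),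
    blockSum_haarStep_of_lt (L := ℓ' + 1) (by omega) hℓ' hi']
  rcases hge.eq_or_lt with rfl | hgt
  · have h₀ : (2 * i).testBit 0 = false := by simp [Nat.testBit_zero]
    have h₁ : (2 * i + 1).testBit 0 = true := by simp [Nat.testBit_zero]
    simp only [haarStep, show ℓ + 1 - ℓ = 1 by omega, h₀, h₁, pow_one,
      show 2 * i / 2 = i by omega, show (2 * i + 1) / 2 = i by omega, Bool.false_eq_true,
      if_true, if_false]
    have hN : (2 : ℝ) ^ N = 2 ^ (N - (ℓ + 1)) * 2 ^ ℓ * 2 := by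
      rw [mul_assoc, ← pow_succ, ← pow_add]
      congr 1
      omega
    rw [hN]
    field_simp
    ring
  · have hsame : haarStep (ℓ' + 1) ℓ a (2 * i + 1) = haarStep (ℓ' + 1) ℓ a (2 * i) := by
      rw [haarStep_eq_haarStep_div (N := ℓ' + 1) (L := ℓ') hgt (Nat.le_succ ℓ'),
        haarStep_eq_haarStep_div (N := ℓ' + 1) (L := ℓ') hgt (Nat.le_succ ℓ') (2 * i),
        Nat.add_sub_cancel_left, pow_one]
      congr 1
      omega
    rw [if_neg hgt.ne', hsame, sub_self, zero_div]

end HaarStep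

def rieszVec (N j : ℕ) : ℝ := if EvenBitsZero 0 j then 2 ^ (N / 2) else 0

def rieszCoef (N ℓ i : ℕ) : ℝ :=
  if ℓ < N ∧ Odd ℓ ∧ EvenBitsZero 1 i then (2 ^ ((ℓ + 1) / 2) : ℝ)⁻¹ else 0

section Riesz

variable {N : ℕ}

lemma rieszVec_nonneg (j : ℕ) : 0 ≤ rieszVec N j := by
  unfold rieszVec
  split_ifs <;> positivity

lemma blockSum_rieszVec {L q : ℕ} (hL : L ≤ N) (hq : q < 2 ^ L) :
    blockSum N L q (rieszVec N) =
      if EvenBitsZero (N - L) q then 2 ^ (N / 2) * 2 ^ ((N - L) / 2) else 0 := by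
  rw [blockSum]
  simp only [rieszVec]
  rw [Finset.sum_ite, Finset.sum_const_zero, add_zero, Finset.sum_const, Finset.filter_filter,
    card_filter_div_eq_and_evenBitsZero (Nat.sub_le N L) (by rwa [Nat.sub_sub_self hL]) 0,
    zero_add]
  split_ifs <;> simp [mul_comm]

lemma hcoef_rieszVec_root (hN : Even N) : hcoef (stepFun N (rieszVec N)) .root = 1 := by
  rw [hcoef_stepFun_root, blockSum_rieszVec (Nat.zero_le N) (by simp),
    if_pos (evenBitsZero_zero _), Nat.sub_zero, ← pow_add, ← two_mul,
    Nat.two_mul_div_two_of_even hN, div_self (by positivity)]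

lemma hcoef_rieszVec_node (hN : Even N) {ℓ i : ℕ} (hi : i < 2 ^ ℓ) :
    hcoef (stepFun N (rieszVec N)) (.node ℓ i) = rieszCoef N ℓ i := by
  rcases lt_or_ge ℓ N with hℓ | hℓ
  swap
  · rw [hcoef_stepFun_node_of_le hℓ hi, rieszCoef, if_neg fun h => by omega]
  have hi' : 2 * i + 1 < 2 ^ (ℓ + 1) := by rw [pow_succ]; omega
  rw [hcoef_stepFun_node hℓ, blockSum_rieszVec hℓ (by omega), blockSum_rieszVec hℓ hi',
    evenBitsZero_two_mul, evenBitsZero_two_mul_add_one]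
  rw [Nat.even_iff] at hN
  rcases Nat.even_or_odd ℓ with hℓ' | hℓ'
  · have hK : ¬ Even (N - (ℓ + 1)) := by rw [Nat.even_iff] at hℓ' ⊢; omega
    have hc : rieszCoef N ℓ i = 0 := if_neg fun h => Nat.not_odd_iff_even.2 hℓ' h.2.1
    simp [hc, hK]
  · have hK : Even (N - (ℓ + 1)) := by rw [Nat.odd_iff] at hℓ'; rw [Nat.even_iff]; omega
    rw [rieszCoef, evenBitsZero_congr (t := 1) (by rw [Nat.odd_iff] at hℓ'; omega)]
    simp only [hK, not_true_eq_false, false_and, if_false, sub_zero, hℓ, hℓ', true_and]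
    split_ifs
    · have hexp :
          (2 : ℝ) ^ N = 2 ^ (N / 2) * 2 ^ ((N - (ℓ + 1)) / 2) * 2 ^ ((ℓ + 1) / 2) := by
        rw [← pow_add, ← pow_add]
        congr 1
        rw [Nat.odd_iff] at hℓ'
        omega
      rw [hexp]
      field_simp
    · rw [zero_div]

lemma integral_abs_stepFun_rieszVec (hN : Even N) : ∫ x, |stepFun N (rieszVec N) x| = 1 := by
  have habs : (fun j => |rieszVec N j|) = rieszVec N :=
    funext fun j => abs_of_nonneg (rieszVec_nonneg j)
  rw [integral_abs_stepFun, habs, ← hcoef_stepFun_root, hcoef_rieszVec_root hN]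

lemma inv_two_pow_le_abs_hcoef_rieszVec (hN : Even N) {I : HIdx} (hI : I.valid)
    (h : hcoef (stepFun N (rieszVec N)) I ≠ 0) :
    (2 ^ (N / 2) : ℝ)⁻¹ ≤ |hcoef (stepFun N (rieszVec N)) I| := by
  cases I with
  | root =>
    rw [hcoef_rieszVec_root hN, abs_one]
    exact inv_le_one_of_one_le₀ (one_le_pow₀ one_le_two)
  | node ℓ i =>
    rw [hcoef_rieszVec_node hN hI, rieszCoef] at h ⊢
    split_ifs at h ⊢ with hc
    · rw [abs_of_pos (by positivity)]
      exact inv_anti₀ (by positivity) (pow_le_pow_right₀ one_le_two (by omega))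
    · exact absurd rfl h

end Riesz

/-- The last nonzero term dominates: `2 * 4 ^ m ≥ 2 * ∑ k < m, 4 ^ k + ∑ k ≤ m, 4 ^ k`. -/
lemma sum_le_abs_sum_of_antitone {C : ℕ → Prop} [DecidablePred C] (hC : Antitone C)
    {y : ℕ → ℝ} {m : ℕ} (hy : ∀ k < m, |y k| = if C k then 2 * 4 ^ k else 0) :
    ∑ k ∈ Finset.range m, (if C k then (4 : ℝ) ^ k else 0) ≤ |∑ k ∈ Finset.range m, y k| := by
  induction m with
  | zero => simp
  | succ m ih =>
    rw [Finset.sum_range_succ, Finset.sum_range_succ]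
    by_cases hm : C m
    · have hC' (k : ℕ) (hk : k ∈ Finset.range m) : C k := hC (Finset.mem_range.1 hk).le hm
      have hgeom : 3 * ∑ k ∈ Finset.range m, (4 : ℝ) ^ k + 1 = 4 ^ m := by
        rw [geom_sum_eq (by norm_num : (4 : ℝ) ≠ 1)]
        ring
      have hprev : |∑ k ∈ Finset.range m, y k| ≤ 2 * ∑ k ∈ Finset.range m, (4 : ℝ) ^ k := by
        refine (Finset.abs_sum_le_sum_abs _ _).trans_eq ?_
        rw [Finset.mul_sum]
        exact Finset.sum_congr rfl fun k hk => by
          rw [hy k (by simp at hk; omega), if_pos (hC' k hk)]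
      have hlast : |y m| = 2 * 4 ^ m := by rw [hy m (by omega), if_pos hm]
      have htri := abs_sub (∑ k ∈ Finset.range m, y k + y m) (∑ k ∈ Finset.range m, y k)
      rw [add_sub_cancel_left] at htri
      rw [Finset.sum_congr rfl fun k hk => if_pos (hC' k hk), if_pos hm]
      linarith
    · have hlast : y m = 0 := abs_eq_zero.1 (by rw [hy m (by omega), if_neg hm])
      rw [if_neg hm, hlast, add_zero, add_zero]
      exact ih fun k hk => hy k (by omega)

def projVec (n : ℕ) : ℕ → ℝ := fun j =>
  ∑ k ∈ Finset.range n, haarStep (4 * n) (4 * k + 3) (rieszCoef (4 * n) (4 * k + 3)) j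

section Projection

variable {n : ℕ}

lemma hcoef_projVec_root : hcoef (stepFun (4 * n) (projVec n)) .root = 0 := by
  unfold projVec
  rw [hcoef_stepFun_sum (I := .root) _ _ trivial]
  exact Finset.sum_eq_zero fun k hk =>
    hcoef_stepFun_haarStep_root (by simp only [Finset.mem_range] at hk; omega)

lemma hcoef_projVec_node {ℓ i : ℕ} (hi : i < 2 ^ ℓ) :
    hcoef (stepFun (4 * n) (projVec n)) (.node ℓ i) =
      if ℓ % 4 = 3 then rieszCoef (4 * n) ℓ i else 0 := by
  rcases lt_or_ge ℓ (4 * n) with hℓ | hℓ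
  swap
  · rw [hcoef_stepFun_node_of_le hℓ hi]
    simp [rieszCoef, not_lt.2 hℓ]
  unfold projVec
  rw [hcoef_stepFun_sum (I := .node ℓ i) _ _ hi]
  have hlevel (k : ℕ) (hk : k ∈ Finset.range n) :
      hcoef (stepFun (4 * n) (haarStep (4 * n) (4 * k + 3) (rieszCoef (4 * n) (4 * k + 3))))
        (.node ℓ i) = if k = ℓ / 4 ∧ ℓ % 4 = 3 then rieszCoef (4 * n) ℓ i else 0 := by
    simp only [Finset.mem_range] at hk
    rw [hcoef_stepFun_haarStep_node (by omega) hℓ hi]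
    by_cases h : ℓ = 4 * k + 3
    · rw [if_pos h, if_pos (by omega), h]
    · rw [if_neg h, if_neg (by omega)]
  rw [Finset.sum_congr rfl hlevel]
  split_ifs with h3
  · simp only [h3, and_true]
    rw [Finset.sum_ite_eq' (Finset.range n), if_pos (Finset.mem_range.2 (by omega))]
  · simp [h3]

lemma abs_haarStep_rieszCoef {k : ℕ} (hk : k < n) (j : ℕ) :
    |haarStep (4 * n) (4 * k + 3) (rieszCoef (4 * n) (4 * k + 3)) j| =
      if EvenBitsZero 0 (j / 2 ^ (4 * n - 4 * k - 2)) then 2 * 4 ^ k else 0 := by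
  have hdiv : j / 2 ^ (4 * n - (4 * k + 3)) / 2 = j / 2 ^ (4 * n - 4 * k - 2) := by
    rw [Nat.div_div_eq_div_mul, ← pow_succ]
    congr 2
    omega
  have hodd : Odd (4 * k + 3) := ⟨2 * k + 1, by ring⟩
  rw [haarStep, rieszCoef, abs_mul, evenBitsZero_one_iff_div_two, hdiv,
    show (4 * k + 3 + 1) / 2 = 2 * k + 2 by omega]
  simp only [show 4 * k + 3 < 4 * n by omega, hodd, true_and]
  have hsign (b : Bool) : |(if b then -2 ^ (4 * k + 3) else 2 ^ (4 * k + 3) : ℝ)| =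
      2 ^ (4 * k + 3) := by
    cases b <;> simp
  rw [hsign]
  split_ifs
  · rw [abs_of_pos (by positivity), show (4 : ℝ) ^ k = 2 ^ (2 * k) by rw [pow_mul]; norm_num]
    field_simp
    rw [← pow_succ, ← pow_add]
    congr 1
    omega
  · simp

lemma evenBitsZero_div_antitone (j : ℕ) :
    Antitone fun k => EvenBitsZero 0 (j / 2 ^ (4 * n - 4 * k - 2)) := by
  intro k l hkl hl
  have := hl.div_two_pow (4 * n - 4 * k - 2 - (4 * n - 4 * l - 2))
  rwa [Nat.div_div_eq_div_mul, ← pow_add, Nat.add_sub_cancel' (by omega),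
    evenBitsZero_congr (t := 0) (by omega)] at this

lemma integral_abs_stepFun_projVec : (n : ℝ) / 2 ≤ ∫ x, |stepFun (4 * n) (projVec n) x| := by
  rw [integral_abs_stepFun, blockSum_zero_zero, le_div_iff₀ (by positivity)]
  have hcard (k : ℕ) (hk : k ∈ Finset.range n) :
      ∑ j ∈ Finset.range (2 ^ (4 * n)),
        (if EvenBitsZero 0 (j / 2 ^ (4 * n - 4 * k - 2)) then (4 : ℝ) ^ k else 0) =
        2 ^ (4 * n) / 2 := by
    simp only [Finset.mem_range] at hk
    rw [Finset.sum_ite, Finset.sum_const_zero, add_zero, Finset.sum_const, nsmul_eq_mul,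
      card_filter_evenBitsZero_div (by omega) 0]
    push_cast
    rw [show (4 : ℝ) ^ k = 2 ^ (2 * k) by rw [pow_mul]; norm_num, ← pow_add, ← pow_add,
      eq_div_iff two_ne_zero, ← pow_succ]
    congr 1
    omega
  calc (n : ℝ) / 2 * 2 ^ (4 * n)
      = ∑ k ∈ Finset.range n, ∑ j ∈ Finset.range (2 ^ (4 * n)),
          (if EvenBitsZero 0 (j / 2 ^ (4 * n - 4 * k - 2)) then (4 : ℝ) ^ k else 0) := by
        rw [Finset.sum_congr rfl hcard, Finset.sum_const, Finset.card_range, nsmul_eq_mul]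
        ring
    _ = ∑ j ∈ Finset.range (2 ^ (4 * n)), ∑ k ∈ Finset.range n,
          (if EvenBitsZero 0 (j / 2 ^ (4 * n - 4 * k - 2)) then (4 : ℝ) ^ k else 0) :=
        Finset.sum_comm
    _ ≤ ∑ j ∈ Finset.range (2 ^ (4 * n)), |projVec n j| :=
        Finset.sum_le_sum fun j _ => sum_le_abs_sum_of_antitone (evenBitsZero_div_antitone j)
          fun k hk => abs_haarStep_rieszCoef hk j

end Projection

def projSet (n : ℕ) : Set HIdx :=
  {I | ∃ ℓ i, I = .node ℓ i ∧ i < 2 ^ ℓ ∧ ℓ % 4 = 3 ∧ rieszCoef (4 * n) ℓ i ≠ 0}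

section ProjSet

variable {n : ℕ}

lemma even_four_mul (n : ℕ) : Even (4 * n) := ⟨2 * n, by ring⟩

lemma mem_projSet_node {ℓ i : ℕ} (hi : i < 2 ^ ℓ) :
    .node ℓ i ∈ projSet n ↔ ℓ % 4 = 3 ∧ rieszCoef (4 * n) ℓ i ≠ 0 := by
  simp [projSet, hi]

lemma valid_and_hcoef_ne_zero_of_mem_projSet {I : HIdx} (hI : I ∈ projSet n) :
    I.valid ∧ hcoef (stepFun (4 * n) (rieszVec (4 * n))) I ≠ 0 := by
  obtain ⟨ℓ, i, rfl, hi, -, hne⟩ := hI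
  exact ⟨hi, by rwa [hcoef_rieszVec_node (even_four_mul n) hi]⟩

lemma henlarge_projSet {ε : ℝ} (hε₀ : 0 < ε) (hε₁ : ε ≤ 1) :
    henlarge (stepFun (4 * n) (rieszVec (4 * n))) (projSet n) ε = projSet n := by
  refine henlarge_eq_self hε₀ hε₁ fun I hI => ?_
  obtain ⟨ℓ, i, rfl, hi, h3, hne⟩ := hI
  obtain ⟨ℓ, rfl⟩ : ∃ ℓ', ℓ = ℓ' + 1 := ⟨ℓ - 1, by omega⟩
  have hparent : i / 2 < 2 ^ ℓ := by rw [pow_succ] at hi; omega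
  refine ⟨ℓ, i, rfl, hi, by rwa [hcoef_rieszVec_node (even_four_mul n) hi], ?_⟩
  rw [hcoef_rieszVec_node (even_four_mul n) hparent, rieszCoef, if_neg]
  rintro ⟨-, hodd, -⟩
  rw [Nat.odd_iff] at hodd
  omega

lemma hcoef_projVec {I : HIdx} (hI : I.valid) :
    hcoef (stepFun (4 * n) (projVec n)) I =
      if I ∈ projSet n then hcoef (stepFun (4 * n) (rieszVec (4 * n))) I else 0 := by
  cases I with
  | root => simp [hcoef_projVec_root, projSet]
  | node ℓ i =>
    rw [hcoef_projVec_node hI, hcoef_rieszVec_node (even_four_mul n) hI, mem_projSet_node hI]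
    by_cases h3 : ℓ % 4 = 3
    · by_cases h0 : rieszCoef (4 * n) ℓ i = 0 <;> simp [h3, h0]
    · simp [h3]

end ProjSet

/-- Lower bound: for `δ = 2^{-2n}` there are norm-one `f` with all nonzero Haar coefficients
of modulus `≥ δ` and `A ⊆ supp_H(f)` with `A_ε(f) = A` for all `0 < ε < 1`, while
`‖P_A(f)‖ ≥ cn ≥ c' log(1/δ)`. -/
theorem stmt16 : ∃ c : ℝ, 0 < c ∧ ∃ c' : ℝ, 0 < c' ∧ ∀ n : ℕ, 1 ≤ n →
    ∃ f : ℝ → ℝ, Integrable f ∧ (∀ x, x ∉ Set.Ico (0 : ℝ) 1 → f x = 0) ∧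
      (∫ x, |f x|) = 1 ∧
      (∀ I : HIdx, I.valid → hcoef f I ≠ 0 → ((2 : ℝ) ^ (2 * n))⁻¹ ≤ |hcoef f I|) ∧
      ∃ A : Set HIdx, (∀ I ∈ A, I.valid ∧ hcoef f I ≠ 0) ∧
        (∀ ε : ℝ, 0 < ε → ε < 1 → henlarge f A ε = A) ∧
        ∃ g : ℝ → ℝ, Integrable g ∧ (∀ x, x ∉ Set.Ico (0 : ℝ) 1 → g x = 0) ∧
          (∀ I : HIdx, I.valid →
            ((I ∈ A → hcoef g I = hcoef f I) ∧ (I ∉ A → hcoef g I = 0))) ∧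
          c * n ≤ (∫ x, |g x|) ∧ c' * Real.log ((2 : ℝ) ^ (2 * n)) ≤ c * n := by
  refine ⟨1 / 2, by norm_num, 1 / 4, by norm_num, fun n _ => ?_⟩
  have hN := even_four_mul n
  refine ⟨stepFun (4 * n) (rieszVec (4 * n)), integrable_stepFun,
    fun x hx => stepFun_eq_zero_of_notMem hx, integral_abs_stepFun_rieszVec hN,
    fun I hI hne => ?_, projSet n, fun I hI => valid_and_hcoef_ne_zero_of_mem_projSet hI,
    fun ε hε₀ hε₁ => henlarge_projSet hε₀ hε₁.le, stepFun (4 * n) (projVec n), integrable_stepFun,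
    fun x hx => stepFun_eq_zero_of_notMem hx,
    fun I hI => ⟨fun h => by rw [hcoef_projVec hI, if_pos h],
      fun h => by rw [hcoef_projVec hI, if_neg h]⟩,
    by linarith [integral_abs_stepFun_projVec (n := n)], ?_⟩
  · simpa [show 4 * n / 2 = 2 * n by omega] using inv_two_pow_le_abs_hcoef_rieszVec hN hI hne
  · have hlog : Real.log 2 ≤ 1 := by
      linarith [Real.log_le_sub_one_of_pos (two_pos : (0 : ℝ) < 2)]
    rw [Real.log_pow]
    push_cast
    nlinarith [(Nat.cast_nonneg n : (0 : ℝ) ≤ n)]
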